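/- arXiv:1905.05945 — 2 statements merged into one kernel-verified Lean document; each statement's English description precedes it below -/
import Mathlib

section
/- The map p ↦ (1/(a-1))·ln(2^(a-1)·(p^a+(1-p)^a)) is strictly increasing on [1/2, 1) for any fixed a>0 with a≠1, hence there is a one-to-one correspondence between p∈[1/2,1) and nonnegative divergence values d0. -/
open Real Set

/-- The calibration map `p ↦ (1/(a-1)) ln (2^(a-1) (p^a + (1-p)^a))` is strictly
increasing on `[1/2, 1)`, hence a one-to-one correspondence between
`p ∈ [1/2,1)` and attained divergence values. -/
theorem stmt_2 (a : ℝ) (ha : 0 < a) (ha1 : a ≠ 1) :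
    StrictMonoOn
      (fun p : ℝ => (1 / (a - 1)) * Real.log ((2 : ℝ) ^ (a - 1) * (p ^ a + (1 - p) ^ a)))
      (Set.Ico (1 / 2 : ℝ) 1) ∧
    Set.InjOn
      (fun p : ℝ => (1 / (a - 1)) * Real.log ((2 : ℝ) ^ (a - 1) * (p ^ a + (1 - p) ^ a)))
      (Set.Ico (1 / 2 : ℝ) 1) := by
  have hc : (0:ℝ) < (2:ℝ) ^ (a - 1) := Real.rpow_pos_of_pos (by norm_num) _
  have hpos : ∀ x : ℝ, 0 < x → x < 1 →
      (0:ℝ) < (2 : ℝ) ^ (a - 1) * (x ^ a + (1 - x) ^ a) := by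
    intro x hx hx1
    have h1 : (0:ℝ) < x ^ a := Real.rpow_pos_of_pos hx _
    have h2 : (0:ℝ) < (1 - x) ^ a := Real.rpow_pos_of_pos (by linarith) _
    positivity
  have key : StrictMonoOn
      (fun p : ℝ => (1 / (a - 1)) * Real.log ((2 : ℝ) ^ (a - 1) * (p ^ a + (1 - p) ^ a)))
      (Set.Ico (1 / 2 : ℝ) 1) := by
    apply strictMonoOn_of_deriv_pos (convex_Ico _ _)
    · intro x hx
      obtain ⟨hx0, hx1⟩ := hx
      have hx0' : (0:ℝ) < x := by linarith
      have hx1' : (0:ℝ) < 1 - x := by linarith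
      apply ContinuousAt.continuousWithinAt
      have c1 : ContinuousAt (fun p : ℝ => p ^ a) x :=
        Real.continuousAt_rpow_const x a (Or.inl hx0'.ne')
      have c2 : ContinuousAt (fun p : ℝ => (1 - p) ^ a) x := by
        have := (Real.continuousAt_rpow_const (1 - x) a (Or.inl hx1'.ne')).comp
          ((continuous_const.sub continuous_id).continuousAt (x := x))
        exact this
      have c3 : ContinuousAt (fun p : ℝ => (2:ℝ)^(a-1) * (p ^ a + (1 - p) ^ a)) x :=
        continuousAt_const.mul (c1.add c2)
      exact (c3.log (hpos x hx0' (by linarith)).ne').const_mul _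
    · intro x hx
      rw [interior_Ico] at hx
      obtain ⟨hx0, hx1⟩ := hx
      have hx0' : (0:ℝ) < x := by linarith
      have hx1' : (0:ℝ) < 1 - x := by linarith
      have hxlt : 1 - x < x := by linarith
      have hg : (0:ℝ) < x ^ a + (1 - x) ^ a := by
        have h1 : (0:ℝ) < x ^ a := Real.rpow_pos_of_pos hx0' _
        have h2 : (0:ℝ) < (1 - x) ^ a := Real.rpow_pos_of_pos hx1' _
        linarith
      have d1 : HasDerivAt (fun p : ℝ => p ^ a) (a * x ^ (a - 1)) x :=
        Real.hasDerivAt_rpow_const (Or.inl hx0'.ne')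
      have d2 : HasDerivAt (fun p : ℝ => (1 - p) ^ a) (a * (1 - x) ^ (a - 1) * (-1)) x := by
        have h := (Real.hasDerivAt_rpow_const (p := a) (x := 1 - x) (Or.inl hx1'.ne')).comp x
          ((hasDerivAt_const x (1:ℝ)).sub (hasDerivAt_id x))
        simpa [Function.comp_def] using h
      have d3 : HasDerivAt (fun p : ℝ => (2:ℝ)^(a-1) * (p ^ a + (1 - p) ^ a))
          ((2:ℝ)^(a-1) * (a * x ^ (a - 1) + a * (1 - x) ^ (a - 1) * (-1))) x :=
        (d1.add d2).const_mul _
      have d4 : HasDerivAt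
          (fun p : ℝ => (1 / (a - 1)) * Real.log ((2 : ℝ) ^ (a - 1) * (p ^ a + (1 - p) ^ a)))
          ((1 / (a - 1)) * (((2:ℝ)^(a-1) * (a * x ^ (a - 1) + a * (1 - x) ^ (a - 1) * (-1))) /
            ((2:ℝ)^(a-1) * (x ^ a + (1 - x) ^ a)))) x :=
        (d3.log (hpos x hx0' (by linarith)).ne').const_mul _
      rw [d4.deriv]
      have hsimp : ((2:ℝ)^(a-1) * (a * x ^ (a - 1) + a * (1 - x) ^ (a - 1) * (-1))) /
            ((2:ℝ)^(a-1) * (x ^ a + (1 - x) ^ a))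
          = a * (x ^ (a - 1) - (1 - x) ^ (a - 1)) / (x ^ a + (1 - x) ^ a) := by
        rw [mul_div_mul_left _ _ hc.ne']
        ring
      rw [hsimp]
      rcases lt_or_gt_of_ne ha1 with hlt | hgt
      · have hd : x ^ (a - 1) < (1 - x) ^ (a - 1) :=
          Real.rpow_lt_rpow_of_neg hx1' hxlt (by linarith)
        have h1 : a * (x ^ (a - 1) - (1 - x) ^ (a - 1)) / (x ^ a + (1 - x) ^ a) < 0 := by
          apply div_neg_of_neg_of_pos _ hg
          have : x ^ (a - 1) - (1 - x) ^ (a - 1) < 0 := by linarith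
          exact mul_neg_of_pos_of_neg ha this
        have h2 : 1 / (a - 1) < 0 := by
          apply div_neg_of_pos_of_neg one_pos; linarith
        exact mul_pos_of_neg_of_neg h2 h1
      · have hd : (1 - x) ^ (a - 1) < x ^ (a - 1) :=
          Real.rpow_lt_rpow hx1'.le hxlt (by linarith)
        have h1 : 0 < a * (x ^ (a - 1) - (1 - x) ^ (a - 1)) / (x ^ a + (1 - x) ^ a) := by
          apply div_pos _ hg
          apply mul_pos ha; linarith
        have h2 : 0 < 1 / (a - 1) := by apply div_pos one_pos; linarith
        exact mul_pos h2 h1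
  exact ⟨key, key.injOn⟩
end

section
/- Let π(θ|x) = λ·π0(θ|x) + (1-λ)·q(θ|x) where λ = (1-ε)·m0/((1-ε)·m0 + ε·mq), π0(θ|x) and q(θ|x) are posterior densities, and m0, mq > 0 are prior predictive densities. Then the first derivative of the Rényi divergence f(ε) = (1/(a-1))·ln(∫ π(θ|x)^a · π0(θ|x)^(1-a) dθ) with respect to ε, evaluated at ε=0, equals 0. -/
open Real MeasureTheory
open Filter Topology Set

private lemma abs_log_le_aux (x : ℝ) (h : |x - 1| ≤ 1/2) : |Real.log x| ≤ 2 * |x - 1| := by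
  obtain ⟨ha', hb'⟩ := abs_le.1 h
  have hx1 : (1:ℝ)/2 ≤ x := by linarith
  have hx0 : 0 < x := by linarith
  rcases le_or_gt 1 x with hge | hlt
  · rw [abs_of_nonneg (Real.log_nonneg hge), abs_of_nonneg (by linarith : (0:ℝ) ≤ x - 1)]
    have := Real.log_le_sub_one_of_pos hx0
    linarith
  · rw [abs_of_nonpos (Real.log_nonpos (by linarith) hlt.le), abs_of_neg (by linarith : x - 1 < 0)]
    have h1 : Real.log x⁻¹ ≤ x⁻¹ - 1 := Real.log_le_sub_one_of_pos (by positivity)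
    rw [Real.log_inv] at h1
    have h2 : x⁻¹ ≤ 3 - 2*x := by
      rw [inv_eq_one_div, div_le_iff₀ hx0]
      nlinarith
    linarith

set_option maxHeartbeats 2000000 in
/-- For the ε-contaminated posterior `π(θ|x) = λ(ε) π0(θ|x) + (1-λ(ε)) q(θ|x)`
with `λ(ε) = (1-ε) m0 / ((1-ε) m0 + ε mq)`, the first derivative at `ε = 0` of
the Rényi divergence `f(ε)` between `π(θ|x)` and `π0(θ|x)` is `0`
(assuming differentiation under the integral sign). -/
theorem stmt_4 (a : ℝ) (ha : 0 < a) (ha1 : a ≠ 1)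
    (p0 qpost : ℝ → ℝ) (m0 mq : ℝ) (hm0 : 0 < m0) (hmq : 0 < mq)
    (hp0pos : ∀ θ, 0 < p0 θ) (hqpos : ∀ θ, 0 < qpost θ)
    (hp0int : MeasureTheory.Integrable p0) (hqint : MeasureTheory.Integrable qpost)
    (hp0one : ∫ θ, p0 θ = 1) (hqone : ∫ θ, qpost θ = 1)
    (lam : ℝ → ℝ)
    (hlam : ∀ ε, lam ε = (1 - ε) * m0 / ((1 - ε) * m0 + ε * mq))
    (post : ℝ → ℝ → ℝ)
    (hpost : ∀ ε θ, post ε θ = lam ε * p0 θ + (1 - lam ε) * qpost θ)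
    (f : ℝ → ℝ)
    (hf : ∀ ε, f ε = (1 / (a - 1)) *
      Real.log (∫ θ, (post ε θ) ^ a * (p0 θ) ^ (1 - a)))
    (hswap : deriv (fun ε => ∫ θ, (post ε θ) ^ a * (p0 θ) ^ (1 - a)) 0
      = ∫ θ, deriv (fun ε => (post ε θ) ^ a * (p0 θ) ^ (1 - a)) 0) :
    deriv f 0 = 0 := by
  classical
  set g : ℝ → ℝ := fun ε => ∫ θ, (post ε θ) ^ a * (p0 θ) ^ (1 - a) with hgdef
  have hfe : f = fun ε => (1 / (a - 1)) * Real.log (g ε) := by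
    funext ε; rw [hf ε]
  rw [hfe, deriv_const_mul_field]
  suffices h : deriv (fun ε => Real.log (g ε)) 0 = 0 by rw [h]; ring
  by_cases hdl : DifferentiableAt ℝ (fun ε => Real.log (g ε)) 0
  swap
  · exact deriv_zero_of_not_differentiableAt hdl
  by_contra hs
  -- ## basic facts about lam and post on a small right interval
  set δ0 : ℝ := min (1/2) (m0 / (2 * mq)) with hδ0def
  have hδ0pos : 0 < δ0 := lt_min (by norm_num) (by positivity)
  have hδ0half : δ0 ≤ 1/2 := min_le_left _ _
  have hεfacts : ∀ ε ∈ Set.Icc (0:ℝ) δ0, ε ≤ 1/2 ∧ ε * mq ≤ m0 / 2 := by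
    rintro ε ⟨h0, h1⟩
    constructor
    · linarith [hδ0half]
    · have h2 : ε ≤ m0 / (2 * mq) := le_trans h1 (min_le_right _ _)
      calc ε * mq ≤ (m0 / (2 * mq)) * mq := by nlinarith
        _ = m0 / 2 := by field_simp
  have hD : ∀ ε ∈ Set.Icc (0:ℝ) δ0, m0 / 2 ≤ (1 - ε) * m0 + ε * mq := by
    rintro ε hε
    obtain ⟨he1, he2⟩ := hεfacts ε hε
    have h0 : 0 ≤ ε := hε.1
    nlinarith [mul_nonneg h0 hmq.le]
  have hDpos : ∀ ε ∈ Set.Icc (0:ℝ) δ0, 0 < (1 - ε) * m0 + ε * mq :=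
    fun ε hε => lt_of_lt_of_le (by positivity) (hD ε hε)
  have hlam_ub : ∀ ε ∈ Set.Icc (0:ℝ) δ0, lam ε ≤ 1 := by
    rintro ε hε
    rw [hlam, div_le_one (hDpos ε hε)]
    nlinarith [mul_nonneg hε.1 hmq.le]
  have hlam_lb : ∀ ε ∈ Set.Icc (0:ℝ) δ0, 1/2 ≤ lam ε := by
    rintro ε hε
    rw [hlam, le_div_iff₀ (hDpos ε hε)]
    obtain ⟨he1, he2⟩ := hεfacts ε hε
    nlinarith
  have hpq_pos : ∀ θ, 0 < p0 θ + qpost θ := fun θ => add_pos (hp0pos θ) (hqpos θ)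
  have hpost_lb : ∀ ε ∈ Set.Icc (0:ℝ) δ0, ∀ θ, p0 θ / 2 ≤ post ε θ := by
    intro ε hε θ
    rw [hpost]
    have h1 := hlam_lb ε hε; have h2 := hlam_ub ε hε
    nlinarith [hp0pos θ, hqpos θ]
  have hpost_pos : ∀ ε ∈ Set.Icc (0:ℝ) δ0, ∀ θ, 0 < post ε θ :=
    fun ε hε θ => lt_of_lt_of_le (half_pos (hp0pos θ)) (hpost_lb ε hε θ)
  have hpost_ub : ∀ ε ∈ Set.Icc (0:ℝ) δ0, ∀ θ, post ε θ ≤ p0 θ + qpost θ := by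
    intro ε hε θ
    rw [hpost]
    have h1 := hlam_lb ε hε; have h2 := hlam_ub ε hε
    nlinarith [hp0pos θ, hqpos θ]
  -- ## derivatives
  have hlam_deriv : ∀ ε : ℝ, (1 - ε) * m0 + ε * mq ≠ 0 →
      HasDerivAt lam (-(m0 * mq) / ((1 - ε) * m0 + ε * mq) ^ 2) ε := by
    intro ε hne
    have h1 : HasDerivAt (fun t : ℝ => (1 - t) * m0) (-m0) ε := by
      have := ((hasDerivAt_id ε).const_sub 1).mul_const m0
      exact this.congr_deriv (by ring)
    have h2 : HasDerivAt (fun t : ℝ => (1 - t) * m0 + t * mq) (-m0 + mq) ε := by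
      have h2' : HasDerivAt (fun t : ℝ => t * mq) mq ε := by
        simpa using (hasDerivAt_id ε).mul_const mq
      exact h1.add h2'
    have h3 := h1.div h2 hne
    have heq : lam = fun t => (1 - t) * m0 / ((1 - t) * m0 + t * mq) := funext hlam
    rw [heq]
    exact h3.congr_deriv (by congr 1; ring)
  have hpost_deriv : ∀ θ, ∀ ε : ℝ, (1 - ε) * m0 + ε * mq ≠ 0 →
      HasDerivAt (fun t => post t θ)
        (-(m0 * mq) / ((1 - ε) * m0 + ε * mq) ^ 2 * (p0 θ - qpost θ)) ε := by
    intro θ ε hne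
    have h := hlam_deriv ε hne
    have heq : (fun t => post t θ) = fun t => lam t * p0 θ + (1 - lam t) * qpost θ :=
      funext fun t => hpost t θ
    rw [heq]
    have h' := (h.mul_const (p0 θ)).add ((h.const_sub 1).mul_const (qpost θ))
    exact h'.congr_deriv (by ring)
  have hphi_deriv : ∀ θ, ∀ ε ∈ Set.Icc (0:ℝ) δ0,
      HasDerivAt (fun t => (post t θ) ^ a * (p0 θ) ^ (1 - a))
        (-(m0 * mq) / ((1 - ε) * m0 + ε * mq) ^ 2 * (p0 θ - qpost θ) * a
          * (post ε θ) ^ (a - 1) * (p0 θ) ^ (1 - a)) ε := by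
    intro θ ε hε
    have hne := (hDpos ε hε).ne'
    exact ((hpost_deriv θ ε hne).rpow_const (Or.inl (hpost_pos ε hε θ).ne')).mul_const _
  have hpow1 : ∀ θ, (p0 θ) ^ (a - 1) * (p0 θ) ^ (1 - a) = 1 := by
    intro θ
    rw [← Real.rpow_add (hp0pos θ)]
    norm_num
  have hlam0 : lam 0 = 1 := by
    rw [hlam]
    norm_num
    exact hm0.ne'
  have hpost0 : ∀ θ, post 0 θ = p0 θ := by
    intro θ; rw [hpost, hlam0]; ring
  set d : ℝ → ℝ := fun θ => -(mq / m0) * (p0 θ - qpost θ) * a with hddef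
  have hd0 : ∀ θ, HasDerivAt (fun t => (post t θ) ^ a * (p0 θ) ^ (1 - a)) (d θ) 0 := by
    intro θ
    have h := hphi_deriv θ 0 ⟨le_refl 0, hδ0pos.le⟩
    have hm0' : m0 ≠ 0 := hm0.ne'
    have hco : -(m0 * mq) / ((1 - (0:ℝ)) * m0 + 0 * mq) ^ 2 = -(mq / m0) := by
      field_simp
      ring
    rw [hpost0 θ, hco] at h
    have hval : -(mq / m0) * (p0 θ - qpost θ) * a * (p0 θ) ^ (a - 1) * (p0 θ) ^ (1 - a) = d θ := by
      rw [mul_assoc, hpow1, mul_one, hddef]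
    rwa [hval] at h
  have hdint : ∫ θ, d θ = 0 := by
    have h1 : (fun θ => d θ) = fun θ => (-(mq / m0) * a) * (p0 θ - qpost θ) := by
      funext θ; rw [hddef]; ring
    rw [h1, integral_const_mul, integral_sub hp0int hqint, hp0one, hqone]
    ring
  have hF0eq : (fun θ => (post 0 θ) ^ a * (p0 θ) ^ (1 - a)) = p0 := by
    funext θ
    rw [hpost0 θ, ← Real.rpow_add (hp0pos θ)]
    norm_num
  have hg0 : g 0 = 1 := by
    rw [hgdef]
    show (∫ θ, (post 0 θ) ^ a * (p0 θ) ^ (1 - a)) = 1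
    rw [hF0eq, hp0one]
  have hF0int : Integrable (fun θ => (post 0 θ) ^ a * (p0 θ) ^ (1 - a)) := by
    rw [hF0eq]; exact hp0int
  -- ## slope of log∘g tends to s ≠ 0 along the right filter
  have hr_le : 𝓝[>] (0:ℝ) ≤ 𝓝[≠] (0:ℝ) :=
    nhdsWithin_mono 0 (fun x hx => by simp only [Set.mem_compl_iff, Set.mem_singleton_iff]; exact ne_of_gt hx)
  have hL : HasDerivAt (fun ε => Real.log (g ε)) (deriv (fun ε => Real.log (g ε)) 0) 0 :=
    hdl.hasDerivAt
  have hslope : Tendsto (fun ε => Real.log (g ε) / ε) (𝓝[>] (0:ℝ))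
      (𝓝 (deriv (fun ε => Real.log (g ε)) 0)) := by
    have h := (hasDerivAt_iff_tendsto_slope.1 hL).mono_left hr_le
    refine h.congr fun ε => ?_
    rw [slope_def_field, hg0, Real.log_one, sub_zero, sub_zero]
  have hne_ev : ∀ᶠ ε in 𝓝[>] (0:ℝ), g ε ≠ 0 := by
    filter_upwards [hslope.eventually_ne hs] with ε hε
    intro h0
    exact hε (by rw [h0, Real.log_zero, zero_div])
  obtain ⟨δ1, hδ1pos, hδ1⟩ : ∃ u ∈ Set.Ioi (0:ℝ), Set.Ioc 0 u ⊆ {ε | g ε ≠ 0} :=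
    mem_nhdsGT_iff_exists_Ioc_subset.1 hne_ev
  set δ : ℝ := min δ1 δ0 with hδdef
  have hδpos : 0 < δ := lt_min hδ1pos hδ0pos
  have hδle0 : δ ≤ δ0 := min_le_right _ _
  have hgne : ∀ ε ∈ Set.Ioc (0:ℝ) δ, g ε ≠ 0 :=
    fun ε hε => hδ1 ⟨hε.1, le_trans hε.2 (min_le_left _ _)⟩
  -- ## measurability and integrability
  have hFmeas : ∀ ε : ℝ, AEStronglyMeasurable (fun θ => (post ε θ) ^ a * (p0 θ) ^ (1 - a)) volume := by
    intro ε
    have hp0m := hp0int.aemeasurable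
    have hqm := hqint.aemeasurable
    have h1 : AEMeasurable (fun θ => post ε θ) volume := by
      have heq : (fun θ => post ε θ) = fun θ => lam ε * p0 θ + (1 - lam ε) * qpost θ :=
        funext fun θ => hpost ε θ
      rw [heq]
      exact (hp0m.const_mul _).add (hqm.const_mul _)
    exact ((h1.pow aemeasurable_const).mul (hp0m.pow aemeasurable_const)).aestronglyMeasurable
  have hFint : ∀ ε ∈ Set.Ioc (0:ℝ) δ, Integrable (fun θ => (post ε θ) ^ a * (p0 θ) ^ (1 - a)) := by
    intro ε hε
    by_contra hni
    exact hgne ε hε (by rw [hgdef]; exact integral_undef hni)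
  -- ## the dominating function
  set K : ℝ := 4 * mq / m0 with hKdef
  have hK : ∀ ε ∈ Set.Icc (0:ℝ) δ0, |(-(m0 * mq) / ((1 - ε) * m0 + ε * mq) ^ 2)| ≤ K := by
    intro ε hε
    have hDe := hD ε hε
    have hDp := hDpos ε hε
    rw [abs_div, abs_neg, abs_of_pos (mul_pos hm0 hmq), abs_of_pos (pow_pos hDp 2),
      div_le_iff₀ (pow_pos hDp 2), hKdef, div_mul_eq_mul_div, le_div_iff₀ hm0]
    nlinarith [mul_pos hm0 hmq, mul_pos hmq hDp]
  set C : ℝ → ℝ := fun θ =>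
    a * K * ((1/2:ℝ) ^ (a - 1) * (p0 θ + qpost θ) + (p0 θ + qpost θ) ^ a * (p0 θ) ^ (1 - a))
    with hCdef
  have hderiv_bound : ∀ θ, ∀ ε ∈ Set.Icc (0:ℝ) δ0,
      |(-(m0 * mq) / ((1 - ε) * m0 + ε * mq) ^ 2 * (p0 θ - qpost θ) * a
        * (post ε θ) ^ (a - 1) * (p0 θ) ^ (1 - a))| ≤ C θ := by
    intro θ ε hε
    have hKb := hK ε hε
    have hpp := hpost_pos ε hε θ
    have hYpos : (0:ℝ) < (p0 θ) ^ (1 - a) := rpow_pos_of_pos (hp0pos θ) _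
    have hRpos : (0:ℝ) < (post ε θ) ^ (a - 1) := rpow_pos_of_pos hpp _
    have habs : |(-(m0 * mq) / ((1 - ε) * m0 + ε * mq) ^ 2 * (p0 θ - qpost θ) * a
        * (post ε θ) ^ (a - 1) * (p0 θ) ^ (1 - a))|
        = |(-(m0 * mq) / ((1 - ε) * m0 + ε * mq) ^ 2)| * |p0 θ - qpost θ| * a
          * (post ε θ) ^ (a - 1) * (p0 θ) ^ (1 - a) := by
      rw [abs_mul, abs_mul, abs_mul, abs_mul, abs_of_pos hYpos, abs_of_pos hRpos, abs_of_pos ha]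
    rw [habs]
    have hpq : |p0 θ - qpost θ| ≤ p0 θ + qpost θ := by
      have := abs_sub (p0 θ) (qpost θ)
      calc |p0 θ - qpost θ| ≤ |p0 θ| + |qpost θ| := abs_sub _ _
        _ = p0 θ + qpost θ := by rw [abs_of_pos (hp0pos θ), abs_of_pos (hqpos θ)]
    have hR : (post ε θ) ^ (a - 1) ≤ (1/2:ℝ) ^ (a - 1) * (p0 θ) ^ (a - 1) + (p0 θ + qpost θ) ^ (a - 1) := by
      rcases le_or_gt 1 a with hge | hlt
      · have h1 : (post ε θ) ^ (a - 1) ≤ (p0 θ + qpost θ) ^ (a - 1) :=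
          rpow_le_rpow hpp.le (hpost_ub ε hε θ) (by linarith)
        have h2 : (0:ℝ) ≤ (1/2:ℝ) ^ (a - 1) * (p0 θ) ^ (a - 1) :=
          mul_nonneg (Real.rpow_nonneg (by norm_num) _) (Real.rpow_nonneg (hp0pos θ).le _)
        linarith
      · have h1 : (post ε θ) ^ (a - 1) ≤ (p0 θ / 2) ^ (a - 1) :=
          rpow_le_rpow_of_nonpos (half_pos (hp0pos θ)) (hpost_lb ε hε θ) (by linarith)
        have h2 : (p0 θ / 2) ^ (a - 1) = (1/2:ℝ) ^ (a - 1) * (p0 θ) ^ (a - 1) := by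
          rw [show p0 θ / 2 = (1/2) * p0 θ by ring, Real.mul_rpow (by norm_num) (hp0pos θ).le]
        have h3 : (0:ℝ) ≤ (p0 θ + qpost θ) ^ (a - 1) := rpow_nonneg (hpq_pos θ).le _
        linarith
    have hW : (p0 θ + qpost θ) ^ (a - 1) * (p0 θ + qpost θ) = (p0 θ + qpost θ) ^ a := by
      rw [← Real.rpow_add_one (hpq_pos θ).ne' (a - 1)]
      norm_num
    have step1 : |(-(m0 * mq) / ((1 - ε) * m0 + ε * mq) ^ 2)| * |p0 θ - qpost θ| * a
          * (post ε θ) ^ (a - 1) * (p0 θ) ^ (1 - a)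
        ≤ K * (p0 θ + qpost θ) * a
          * ((1/2:ℝ) ^ (a - 1) * (p0 θ) ^ (a - 1) + (p0 θ + qpost θ) ^ (a - 1)) * (p0 θ) ^ (1 - a) := by
      have hK0 : (0:ℝ) ≤ K := (abs_nonneg _).trans hKb
      have hpq0 : (0:ℝ) ≤ p0 θ + qpost θ := (hpq_pos θ).le
      have b1 : |(-(m0 * mq) / ((1 - ε) * m0 + ε * mq) ^ 2)| * |p0 θ - qpost θ|
          ≤ K * (p0 θ + qpost θ) := mul_le_mul hKb hpq (abs_nonneg _) hK0
      have c1 := mul_le_mul_of_nonneg_right b1 ha.le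
      have c2 := mul_le_mul c1 hR hRpos.le
        (mul_nonneg (mul_nonneg hK0 hpq0) ha.le)
      exact mul_le_mul_of_nonneg_right c2 hYpos.le
    refine step1.trans (le_of_eq ?_)
    rw [hCdef]
    linear_combination (a * K * ((1/2:ℝ) ^ (a - 1)) * (p0 θ + qpost θ)) * hpow1 θ
      + (a * K * (p0 θ) ^ (1 - a)) * hW
  have hCint : Integrable C := by
    have hδIcc : δ ∈ Set.Icc (0:ℝ) δ0 := ⟨hδpos.le, hδle0⟩
    have hδ1' : δ < 1 := lt_of_le_of_lt (hδle0.trans hδ0half) (by norm_num)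
    have hlamδ1 : lam δ < 1 := by
      rw [hlam, div_lt_one (hDpos δ hδIcc)]
      linarith [mul_pos hδpos hmq]
    have hlamδ0 : 0 < lam δ := by
      rw [hlam]
      exact div_pos (by nlinarith [hδ1', hm0]) (hDpos δ hδIcc)
    set c : ℝ := min (lam δ) (1 - lam δ) with hcdef
    have hcpos : 0 < c := lt_min hlamδ0 (by linarith)
    have hpostδ_lb : ∀ θ, c * (p0 θ + qpost θ) ≤ post δ θ := by
      intro θ
      rw [hpost]
      have h1 : c ≤ lam δ := min_le_left _ _
      have h2 : c ≤ 1 - lam δ := min_le_right _ _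
      nlinarith [hp0pos θ, hqpos θ]
    have hB2int : Integrable (fun θ => (p0 θ + qpost θ) ^ a * (p0 θ) ^ (1 - a)) := by
      have hFδ : Integrable (fun θ => (post δ θ) ^ a * (p0 θ) ^ (1 - a)) :=
        hFint δ ⟨hδpos, le_refl δ⟩
      refine (hFδ.const_mul ((1/c) ^ a)).mono ?_ ?_
      · have hp0m := hp0int.aemeasurable
        have hqm := hqint.aemeasurable
        exact (((hp0m.add hqm).pow aemeasurable_const).mul
          (hp0m.pow aemeasurable_const)).aestronglyMeasurable
      · refine Filter.Eventually.of_forall fun θ => ?_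
        have hpδ := hpost_pos δ hδIcc θ
        have hYpos : (0:ℝ) < (p0 θ) ^ (1 - a) := rpow_pos_of_pos (hp0pos θ) _
        have h1 : p0 θ + qpost θ ≤ post δ θ / c := by
          rw [le_div_iff₀ hcpos]
          calc (p0 θ + qpost θ) * c = c * (p0 θ + qpost θ) := by ring
            _ ≤ post δ θ := hpostδ_lb θ
        have h2 : (p0 θ + qpost θ) ^ a ≤ (1/c) ^ a * (post δ θ) ^ a := by
          calc (p0 θ + qpost θ) ^ a ≤ (post δ θ / c) ^ a :=
              rpow_le_rpow (hpq_pos θ).le h1 ha.le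
            _ = (1/c) ^ a * (post δ θ) ^ a := by
              rw [show post δ θ / c = (1/c) * post δ θ by ring,
                Real.mul_rpow (by positivity) hpδ.le]
        have hn1 : (0:ℝ) ≤ (p0 θ + qpost θ) ^ a * (p0 θ) ^ (1 - a) :=
          mul_nonneg (Real.rpow_nonneg (hpq_pos θ).le _) (Real.rpow_nonneg (hp0pos θ).le _)
        have hn2 : (0:ℝ) ≤ (1/c) ^ a * ((post δ θ) ^ a * (p0 θ) ^ (1 - a)) :=
          mul_nonneg (Real.rpow_nonneg (by positivity) _)
            (mul_nonneg (Real.rpow_nonneg hpδ.le _) (Real.rpow_nonneg (hp0pos θ).le _))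
        rw [Real.norm_eq_abs, Real.norm_eq_abs, abs_of_nonneg hn1, abs_of_nonneg hn2]
        calc (p0 θ + qpost θ) ^ a * (p0 θ) ^ (1 - a)
            ≤ ((1/c) ^ a * (post δ θ) ^ a) * (p0 θ) ^ (1 - a) :=
              mul_le_mul_of_nonneg_right h2 hYpos.le
          _ = (1/c) ^ a * ((post δ θ) ^ a * (p0 θ) ^ (1 - a)) := by ring
    have h1 : Integrable (fun θ => (1/2:ℝ) ^ (a - 1) * (p0 θ + qpost θ)) :=
      (hp0int.add hqint).const_mul _
    rw [hCdef]
    exact (h1.add hB2int).const_mul _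
  -- ## mean value theorem bound for the difference quotients
  have hMVT : ∀ θ, ∀ ε ∈ Set.Ioc (0:ℝ) δ,
      |((post ε θ) ^ a * (p0 θ) ^ (1 - a) - (post 0 θ) ^ a * (p0 θ) ^ (1 - a)) / ε| ≤ C θ := by
    intro θ ε hε
    have hIccsub : Set.Icc (0:ℝ) δ ⊆ Set.Icc 0 δ0 := Set.Icc_subset_Icc le_rfl hδle0
    have key := Convex.norm_image_sub_le_of_norm_hasDerivWithin_le
      (f := fun t => (post t θ) ^ a * (p0 θ) ^ (1 - a))
      (f' := fun t => -(m0 * mq) / ((1 - t) * m0 + t * mq) ^ 2 * (p0 θ - qpost θ) * a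
        * (post t θ) ^ (a - 1) * (p0 θ) ^ (1 - a))
      (s := Set.Icc (0:ℝ) δ) (C := C θ)
      (fun t ht => (hphi_deriv θ t (hIccsub ht)).hasDerivWithinAt)
      (fun t ht => by rw [Real.norm_eq_abs]; exact hderiv_bound θ t (hIccsub ht))
      (convex_Icc 0 δ) ⟨le_rfl, hδpos.le⟩ ⟨hε.1.le, hε.2⟩
    rw [Real.norm_eq_abs, Real.norm_eq_abs, sub_zero, abs_of_pos hε.1] at key
    rw [abs_div, abs_of_pos hε.1, div_le_iff₀ hε.1]
    exact key
  -- ## pointwise convergence of difference quotients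
  have hptw : ∀ θ, Tendsto
      (fun ε => ((post ε θ) ^ a * (p0 θ) ^ (1 - a) - (post 0 θ) ^ a * (p0 θ) ^ (1 - a)) / ε)
      (𝓝[>] (0:ℝ)) (𝓝 (d θ)) := by
    intro θ
    have h := (hasDerivAt_iff_tendsto_slope.1 (hd0 θ)).mono_left hr_le
    refine h.congr fun ε => ?_
    rw [slope_def_field, sub_zero]
  -- ## dominated convergence
  have hDCT : Tendsto
      (fun ε => ∫ θ, ((post ε θ) ^ a * (p0 θ) ^ (1 - a) - (post 0 θ) ^ a * (p0 θ) ^ (1 - a)) / ε)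
      (𝓝[>] (0:ℝ)) (𝓝 (∫ θ, d θ)) := by
    refine tendsto_integral_filter_of_dominated_convergence C ?_ ?_ hCint ?_
    · exact Filter.Eventually.of_forall fun ε => (((hFmeas ε).aemeasurable.sub (hFmeas 0).aemeasurable).div aemeasurable_const).aestronglyMeasurable
    · filter_upwards [Ioc_mem_nhdsGT_of_mem (Set.mem_Ico.2 ⟨le_rfl, hδpos⟩)] with ε hε
      exact Filter.Eventually.of_forall fun θ => by
        rw [Real.norm_eq_abs]; exact hMVT θ ε hε
    · exact Filter.Eventually.of_forall fun θ => hptw θ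
  -- ## transfer to the difference quotient of g
  have hgq : Tendsto (fun ε => (g ε - 1) / ε) (𝓝[>] (0:ℝ)) (𝓝 0) := by
    rw [hdint] at hDCT
    refine hDCT.congr' ?_
    filter_upwards [Ioc_mem_nhdsGT_of_mem (Set.mem_Ico.2 ⟨le_rfl, hδpos⟩)] with ε hε
    have h0 : (∫ θ, (post 0 θ) ^ a * (p0 θ) ^ (1 - a)) = 1 := by rw [hF0eq, hp0one]
    rw [show (fun θ => ((post ε θ) ^ a * (p0 θ) ^ (1 - a) - (post 0 θ) ^ a * (p0 θ) ^ (1 - a)) / ε)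
      = fun θ => ((post ε θ) ^ a * (p0 θ) ^ (1 - a) - (post 0 θ) ^ a * (p0 θ) ^ (1 - a)) / ε from rfl]
    rw [integral_div, integral_sub (hFint ε hε) hF0int, h0, hgdef]
  have hgm1 : Tendsto (fun ε => g ε - 1) (𝓝[>] (0:ℝ)) (𝓝 0) := by
    have hid : Tendsto (fun ε : ℝ => ε) (𝓝[>] (0:ℝ)) (𝓝 0) :=
      tendsto_id.mono_right nhdsWithin_le_nhds
    have hmul := hid.mul hgq
    rw [mul_zero] at hmul
    refine hmul.congr' ?_
    filter_upwards [self_mem_nhdsWithin] with ε (hε : ε ∈ Set.Ioi (0:ℝ))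
    have hε0 : ε ≠ 0 := ne_of_gt hε
    field_simp
  have hev_half : ∀ᶠ ε in 𝓝[>] (0:ℝ), |g ε - 1| ≤ 1/2 := by
    have hIcc : Set.Icc (-(1/2):ℝ) (1/2) ∈ 𝓝 (0:ℝ) := Icc_mem_nhds (by norm_num) (by norm_num)
    filter_upwards [hgm1 hIcc] with ε hε
    have := Set.mem_Icc.1 hε
    rw [abs_le]
    exact ⟨by linarith [this.1], this.2⟩
  have hzero : Tendsto (fun ε => Real.log (g ε) / ε) (𝓝[>] (0:ℝ)) (𝓝 0) := by
    apply squeeze_zero_norm' (a := fun ε => 2 * |(g ε - 1) / ε|)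
    · filter_upwards [hev_half, self_mem_nhdsWithin] with ε h1 (h2 : ε ∈ Set.Ioi (0:ℝ))
      have hlog := abs_log_le_aux (g ε) h1
      rw [Real.norm_eq_abs, abs_div, abs_div, ← mul_div_assoc]
      gcongr
    · have habs : Tendsto (fun ε => |(g ε - 1) / ε|) (𝓝[>] (0:ℝ)) (𝓝 |0|) := hgq.abs
      rw [abs_zero] at habs
      simpa using habs.const_mul 2
  exact hs (tendsto_nhds_unique hslope hzero)
end
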